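/- arXiv:2102.12910 — 2 statements merged into one kernel-verified Lean document; each statement's English description precedes it below -/
import Mathlib

section
/- For every n ∈ ℕ there exist constants α₀ = α₀(n) > 0 and C = C(n) > 0 such that the following holds. Let S ⊂ ℝ^d with d > n, let r > 0 and x, y ∈ S be such that α(x,r) ≤ α₀, α(y,r) ≤ α₀ and |x − y| < r/4. Then for any choice of realizing planes Γ_x^r and Γ_y^r one has d(Γ_x^r, Γ_y^r) ≤ C·(β(x,r) + β(y,r)). -/
open Metric Set

noncomputable section

/-- Gromov–Hausdorff distance via metrics on the disjoint union. -/
def ghDist (X Y : Type) [MetricSpace X] [MetricSpace Y] : ℝ :=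
  sInf {r : ℝ | ∃ M : MetricSpace (X ⊕ Y),
    (∀ a b : X, @dist _ M.toPseudoMetricSpace.toDist (Sum.inl a) (Sum.inl b) = dist a b) ∧
    (∀ a b : Y, @dist _ M.toPseudoMetricSpace.toDist (Sum.inr a) (Sum.inr b) = dist a b) ∧
    @Metric.hausdorffDist _ M.toPseudoMetricSpace (Set.range Sum.inl) (Set.range Sum.inr) ≤ r}

def planeHD {d : ℕ} (S : Set (EuclideanSpace ℝ (Fin d)))
    (Γ : AffineSubspace ℝ (EuclideanSpace ℝ (Fin d)))
    (x : EuclideanSpace ℝ (Fin d)) (r : ℝ) : ℝ :=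
  r⁻¹ * Metric.hausdorffDist (S ∩ Metric.ball x r)
    ((Γ : Set (EuclideanSpace ℝ (Fin d))) ∩ Metric.ball x r)

def planeSup {d : ℕ} (S : Set (EuclideanSpace ℝ (Fin d)))
    (Γ : AffineSubspace ℝ (EuclideanSpace ℝ (Fin d)))
    (x : EuclideanSpace ℝ (Fin d)) (r : ℝ) : ℝ :=
  r⁻¹ * sSup ((fun y => Metric.infDist y (Γ : Set (EuclideanSpace ℝ (Fin d)))) ''
    (S ∩ Metric.ball x r))

def alphaNum (n : ℕ) {d : ℕ} (S : Set (EuclideanSpace ℝ (Fin d)))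
    (x : EuclideanSpace ℝ (Fin d)) (r : ℝ) : ℝ :=
  sInf {t : ℝ | ∃ Γ : AffineSubspace ℝ (EuclideanSpace ℝ (Fin d)),
    x ∈ Γ ∧ Module.finrank ℝ Γ.direction = n ∧ t = planeHD S Γ x r}

def betaNum (n : ℕ) {d : ℕ} (S : Set (EuclideanSpace ℝ (Fin d)))
    (x : EuclideanSpace ℝ (Fin d)) (r : ℝ) : ℝ :=
  sInf {t : ℝ | ∃ Γ : AffineSubspace ℝ (EuclideanSpace ℝ (Fin d)),
    x ∈ Γ ∧ Module.finrank ℝ Γ.direction = n ∧ t = planeSup S Γ x r}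

def aTilde (n : ℕ) {d : ℕ} (S : Set (EuclideanSpace ℝ (Fin d)))
    (x : EuclideanSpace ℝ (Fin d)) (r : ℝ) : ℝ :=
  r⁻¹ * ghDist (↥(S ∩ Metric.ball x r)) (↥(Metric.ball (0 : EuclideanSpace ℝ (Fin n)) r))

def bTilde (n : ℕ) {d : ℕ} (S : Set (EuclideanSpace ℝ (Fin d)))
    (x : EuclideanSpace ℝ (Fin d)) (r : ℝ) : ℝ :=
  r⁻¹ * sInf {δ : ℝ | 0 < δ ∧
    ∃ f : ↥(S ∩ Metric.ball x r) → ↥(Metric.ball (0 : EuclideanSpace ℝ (Fin n)) r),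
      ∀ a b, |dist (f a) (f b) - dist a b| < δ}

def alphaSeq (n : ℕ) {d : ℕ} (S : Set (EuclideanSpace ℝ (Fin d))) (i : ℤ) : ℝ :=
  sSup ((fun x => alphaNum n S x ((2 : ℝ) ^ (-i))) '' (S ∩ Metric.ball 0 1))

def betaSeq (n : ℕ) {d : ℕ} (S : Set (EuclideanSpace ℝ (Fin d))) (i : ℤ) : ℝ :=
  sSup ((fun x => betaNum n S x ((2 : ℝ) ^ (-i))) '' (S ∩ Metric.ball 0 1))

def aTildeSeq (n : ℕ) {d : ℕ} (S : Set (EuclideanSpace ℝ (Fin d))) (ε : ℝ) (i : ℤ) : ℝ :=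
  sSup ((fun x => aTilde n S x ((2 : ℝ) ^ (-i))) '' (S ∩ Metric.ball 0 (1 - ε)))

def bTildeSeq (n : ℕ) {d : ℕ} (S : Set (EuclideanSpace ℝ (Fin d))) (ε : ℝ) (i : ℤ) : ℝ :=
  sSup ((fun x => bTilde n S x ((2 : ℝ) ^ (-i))) '' (S ∩ Metric.ball 0 (1 - ε)))

def planeDist {d : ℕ} (Γ₁ Γ₂ : AffineSubspace ℝ (EuclideanSpace ℝ (Fin d))) : ℝ :=
  Metric.hausdorffDist
    ((Γ₁.direction : Set (EuclideanSpace ℝ (Fin d))) ∩ Metric.closedBall 0 1)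
    ((Γ₂.direction : Set (EuclideanSpace ℝ (Fin d))) ∩ Metric.closedBall 0 1)

def simplexVol (n : ℕ) {d : ℕ} (p : Fin (n + 1) → EuclideanSpace ℝ (Fin d)) : ℝ :=
  Real.sqrt (Matrix.det (Matrix.of fun i j : Fin n =>
    (inner ℝ (p i.succ - p 0) (p j.succ - p 0) : ℝ))) / (n.factorial : ℝ)

def IsRealizingPlane (n : ℕ) {d : ℕ} (C' : ℝ) (S : Set (EuclideanSpace ℝ (Fin d)))
    (Γ : AffineSubspace ℝ (EuclideanSpace ℝ (Fin d))) (x : EuclideanSpace ℝ (Fin d))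
    (r : ℝ) : Prop :=
  x ∈ Γ ∧ Module.finrank ℝ Γ.direction = n ∧ planeSup S Γ x r = betaNum n S x r ∧
    planeHD S Γ x r ≤ C' * alphaNum n S x r

/-! The realizing plane at `x` is `ε r`-close to `S` in `B_r(x)`, so `S` contains points `s_i`
near `x + (r/4) u_i` for an orthonormal basis `u` of its direction. Projecting the `s_i` to both
planes turns `s_i - x` into vectors `w_i ∈ Γ₁.direction` and `w'_i ∈ Γ₂.direction` at distance
`O((β(x,r) + β(y,r)) r)`; the `w_i` form a perturbed orthonormal frame of `Γ₁.direction`, so every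
unit vector of `Γ₁.direction` has bounded coordinates in it and is therefore `O(β(x,r) + β(y,r))`
close to `Γ₂.direction`. When `β(x,r) + β(y,r)` is not small, the trivial bound `d(Γ₁, Γ₂) ≤ 1`
suffices. -/

open Finset

theorem sum_abs_le_sqrt_card_mul_sqrt_sum_sq {n : ℕ} (c : Fin n → ℝ) :
    ∑ i, |c i| ≤ √n * √(∑ i, c i ^ 2) := by
  rw [← Real.sqrt_mul (Nat.cast_nonneg n)]
  apply Real.le_sqrt_of_sq_le
  simpa [sq_abs] using sq_sum_le_card_mul_sum_sq (s := univ) (f := fun i => |c i|)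

theorem Real.sqrt_natCast_le_add_one (n : ℕ) : √n ≤ n + 1 :=
  Real.sqrt_le_iff.mpr ⟨by positivity, by nlinarith⟩

section Frame

variable {E : Type*} [NormedAddCommGroup E] [InnerProductSpace ℝ E] {n : ℕ}

theorem norm_sum_smul_le_of_norm_le {h : Fin n → E} {θ : ℝ} (hθ : 0 ≤ θ) (hh : ∀ i, ‖h i‖ ≤ θ)
    (c : Fin n → ℝ) : ‖∑ i, c i • h i‖ ≤ √n * √(∑ i, c i ^ 2) * θ :=
  calc ‖∑ i, c i • h i‖ ≤ ∑ i, |c i| * θ := (norm_sum_le _ _).trans <| sum_le_sum fun i _ => by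
        rw [norm_smul, Real.norm_eq_abs]; gcongr; exact hh i
    _ = (∑ i, |c i|) * θ := (sum_mul ..).symm
    _ ≤ √n * √(∑ i, c i ^ 2) * θ := by gcongr; exact sum_abs_le_sqrt_card_mul_sqrt_sum_sq c

theorem Orthonormal.norm_sum_smul {u : Fin n → E} (hu : Orthonormal ℝ u) (c : Fin n → ℝ) :
    ‖∑ i, c i • u i‖ = √(∑ i, c i ^ 2) := by
  rw [norm_eq_sqrt_real_inner, hu.inner_sum]
  simp [sq]

variable {u w : Fin n → E} {ρ θ : ℝ}

theorem Orthonormal.mul_sqrt_sum_sq_le_two_mul_norm_sum_smul (hu : Orthonormal ℝ u) (hρ : 0 ≤ ρ)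
    (hθ : 0 ≤ θ) (hnθ : √n * θ ≤ 1 / 2) (hwu : ∀ i, ‖w i - ρ • u i‖ ≤ ρ * θ) (c : Fin n → ℝ) :
    ρ * √(∑ i, c i ^ 2) ≤ 2 * ‖∑ i, c i • w i‖ := by
  have hsplit : ρ • ∑ i, c i • u i - ∑ i, c i • w i = ∑ i, c i • (ρ • u i - w i) := by
    simp only [smul_sum, smul_sub, ← sum_sub_distrib, smul_comm ρ]
  have hpert := norm_sum_smul_le_of_norm_le (mul_nonneg hρ hθ)
    (fun i => (norm_sub_rev _ _).trans_le (hwu i)) c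
  have htri := norm_le_norm_add_norm_sub' (ρ • ∑ i, c i • u i) (∑ i, c i • w i)
  rw [hsplit, norm_smul, hu.norm_sum_smul, Real.norm_of_nonneg hρ] at htri
  nlinarith [mul_le_mul_of_nonneg_left hnθ (mul_nonneg hρ (Real.sqrt_nonneg (∑ i, c i ^ 2)))]

theorem Orthonormal.linearIndependent_of_norm_sub_smul_le (hu : Orthonormal ℝ u) (hρ : 0 < ρ)
    (hθ : 0 ≤ θ) (hnθ : √n * θ ≤ 1 / 2) (hwu : ∀ i, ‖w i - ρ • u i‖ ≤ ρ * θ) :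
    LinearIndependent ℝ w := by
  rw [Fintype.linearIndependent_iff]
  intro c hc i
  have hlow := hu.mul_sqrt_sum_sq_le_two_mul_norm_sum_smul hρ.le hθ hnθ hwu c
  rw [hc, norm_zero, mul_zero] at hlow
  have hsum : ∑ j, c j ^ 2 ≤ 0 :=
    Real.sqrt_eq_zero'.mp (le_antisymm (nonpos_of_mul_nonpos_right hlow hρ) (Real.sqrt_nonneg _))
  exact pow_eq_zero_iff two_ne_zero |>.mp <|
    le_antisymm ((single_le_sum (fun j _ => sq_nonneg (c j)) (mem_univ i)).trans hsum) (sq_nonneg _)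

theorem Submodule.exists_mem_closedBall_dist_le (W : Submodule ℝ E) [W.HasOrthogonalProjection]
    {v w : E} {R : ℝ} (hv : ‖v‖ ≤ R) (hw : w ∈ W) :
    ∃ v' ∈ (W : Set E) ∩ closedBall 0 R, dist v v' ≤ ‖v - w‖ := by
  refine ⟨W.starProjection v, ⟨W.starProjection_apply_mem v, ?_⟩, ?_⟩
  · exact mem_closedBall_zero_iff.mpr ((W.norm_starProjection_apply_le v).trans hv)
  · rw [dist_eq_norm, W.starProjection_minimal]
    exact ciInf_le ⟨0, by rintro _ ⟨z, rfl⟩; exact norm_nonneg _⟩ (⟨w, hw⟩ : W)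

theorem Submodule.exists_mem_closedBall_dist_le_of_frame {V W : Submodule ℝ E}
    [FiniteDimensional ℝ V] [W.HasOrthogonalProjection] (hV : Module.finrank ℝ V = n)
    {w' : Fin n → E} {δ : ℝ} (hu : Orthonormal ℝ u) (hw : ∀ i, w i ∈ V) (hw' : ∀ i, w' i ∈ W)
    (hρ : 0 < ρ) (hθ : 0 ≤ θ) (hδ : 0 ≤ δ) (hnθ : √n * θ ≤ 1 / 2)
    (hwu : ∀ i, ‖w i - ρ • u i‖ ≤ ρ * θ)
    (hww' : ∀ i, ‖w i - w' i‖ ≤ ρ * δ) {v : E} (hv : v ∈ V) (hv1 : ‖v‖ ≤ 1) :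
    ∃ v' ∈ (W : Set E) ∩ closedBall 0 1, dist v v' ≤ 2 * √n * δ := by
  have hli := hu.linearIndependent_of_norm_sub_smul_le hρ hθ hnθ hwu
  have hspan : span ℝ (range w) = V := Submodule.eq_of_le_of_finrank_le
    (span_le.mpr (range_subset_iff.mpr hw)) (by rw [hV, finrank_span_eq_card hli, Fintype.card_fin])
  obtain ⟨c, rfl⟩ := (mem_span_range_iff_exists_fun ℝ).mp (hspan ▸ hv)
  have hc : ρ * √(∑ i, c i ^ 2) ≤ 2 :=
    (hu.mul_sqrt_sum_sq_le_two_mul_norm_sum_smul hρ.le hθ hnθ hwu c).trans (by linarith)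
  obtain ⟨v', hv', hdist⟩ :=
    W.exists_mem_closedBall_dist_le hv1 (sum_mem fun i _ => W.smul_mem (c i) (hw' i))
  refine ⟨v', hv', hdist.trans ?_⟩
  rw [← sum_sub_distrib]
  simp_rw [← smul_sub]
  calc ‖∑ i, c i • (w i - w' i)‖ ≤ √n * √(∑ i, c i ^ 2) * (ρ * δ) :=
        norm_sum_smul_le_of_norm_le (mul_nonneg hρ.le hδ) hww' c
    _ = √n * (ρ * √(∑ i, c i ^ 2)) * δ := by ring
    _ ≤ √n * 2 * δ := by gcongr
    _ = 2 * √n * δ := by ring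

end Frame

theorem AffineSubspace.exists_mem_direction_near {E : Type*} [NormedAddCommGroup E]
    [NormedSpace ℝ E] {Γ₁ Γ₂ : AffineSubspace ℝ E} {x s : E} {δ₁ δ₂ : ℝ} (hx : x ∈ Γ₁)
    (h₁ : ∃ t ∈ Γ₁, dist s t ≤ δ₁) (h₂ : ∃ t ∈ Γ₂, dist s t ≤ δ₂) (h₀ : ∃ z ∈ Γ₂, dist x z ≤ δ₂) :
    ∃ w ∈ Γ₁.direction, ∃ w' ∈ Γ₂.direction, ‖w - (s - x)‖ ≤ δ₁ ∧ ‖w - w'‖ ≤ δ₁ + 2 * δ₂ := by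
  obtain ⟨t₁, ht₁, hst₁⟩ := h₁
  obtain ⟨t₂, ht₂, hst₂⟩ := h₂
  obtain ⟨z, hz, hxz⟩ := h₀
  refine ⟨t₁ - x, Γ₁.vsub_mem_direction ht₁ hx, t₂ - z, Γ₂.vsub_mem_direction ht₂ hz, ?_, ?_⟩
  · rwa [sub_sub_sub_cancel_right, ← dist_eq_norm, dist_comm]
  · calc ‖t₁ - x - (t₂ - z)‖ = ‖(t₁ - s) + (s - t₂) + (z - x)‖ := by congr 1; abel
      _ ≤ dist s t₁ + dist s t₂ + dist x z := by
        simpa only [dist_eq_norm, norm_sub_rev s t₁, norm_sub_rev x z] using norm_add₃_le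
      _ ≤ δ₁ + 2 * δ₂ := by linarith

theorem Metric.exists_mem_inter_ball_dist_lt_of_hausdorffDist_lt {X : Type*} [PseudoMetricSpace X]
    {A B : Set X} {x q : X} {r D : ℝ} (hxA : x ∈ A) (hxB : x ∈ B)
    (hH : hausdorffDist (A ∩ ball x r) (B ∩ ball x r) < D) (hq : q ∈ B ∩ ball x r) :
    ∃ s ∈ A ∩ ball x r, dist s q < D := by
  have hr : 0 < r := pos_of_mem_ball hq.2
  exact exists_dist_lt_of_hausdorffDist_lt' hq hH <| hausdorffEDist_ne_top_of_nonempty_of_bounded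
    ⟨x, hxA, mem_ball_self hr⟩ ⟨x, hxB, mem_ball_self hr⟩
    (isBounded_ball.subset inter_subset_right) (isBounded_ball.subset inter_subset_right)

theorem AffineSubspace.exists_mem_direction_dist_le_of_flat {E : Type*} [NormedAddCommGroup E]
    [InnerProductSpace ℝ E] [FiniteDimensional ℝ E] {n : ℕ} {S : Set E}
    {Γ₁ Γ₂ : AffineSubspace ℝ E} {x y : E} {r ε β₁ β₂ : ℝ} (hr : 0 < r) (hxS : x ∈ S) (hx : x ∈ Γ₁)
    (hxy : ‖x - y‖ < r / 4) (hΓ₁ : Module.finrank ℝ Γ₁.direction = n) (hε : 0 < ε)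
    (hεn : 24 * (n + 1) * ε ≤ 1)
    (hHD : hausdorffDist (S ∩ ball x r) ((Γ₁ : Set E) ∩ ball x r) ≤ ε * r)
    (hβ₁ : ∀ s ∈ S ∩ ball x r, ∃ t ∈ Γ₁, dist s t ≤ β₁ * r)
    (hβ₂ : ∀ s ∈ S ∩ ball y r, ∃ t ∈ Γ₂, dist s t ≤ β₂ * r) (hβ₁0 : 0 ≤ β₁) (hβ₂0 : 0 ≤ β₂)
    (hβ₁ε : β₁ ≤ ε) {v : E} (hv : v ∈ Γ₁.direction) (hv1 : ‖v‖ ≤ 1) :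
    ∃ w ∈ (Γ₂.direction : Set E) ∩ closedBall 0 1, dist v w ≤ 16 * √n * (β₁ + β₂) := by
  -- `24 (n + 1) ε ≤ 1` is what makes the `w_i` a frame (`β₁ ≤ ε`, `√n ≤ n + 1`) and, through
  -- `ε ≤ 1/24`, keeps the `s_i` inside `B_r(y)`.
  let b := (stdOrthonormalBasis ℝ Γ₁.direction).reindex (finCongr hΓ₁)
  have hu : Orthonormal ℝ (fun i => (b i : E)) :=
    b.orthonormal.comp_linearIsometry Γ₁.direction.subtypeₗᵢ
  have hxy' : x ∈ S ∩ ball y r := ⟨hxS, by rw [mem_ball, dist_eq_norm]; linarith⟩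
  have hframe : ∀ i, ∃ w ∈ Γ₁.direction, ∃ w' ∈ Γ₂.direction,
      ‖w - (r / 4) • (b i : E)‖ ≤ r / 4 * (4 * β₁ + 8 * ε) ∧
        ‖w - w'‖ ≤ r / 4 * (4 * (β₁ + 2 * β₂)) := by
    intro i
    have hqx : dist ((r / 4) • (b i : E) + x) x = r / 4 := by
      rw [dist_eq_norm, add_sub_cancel_right, norm_smul, hu.1 i,
        Real.norm_of_nonneg (by positivity), mul_one]
    have hq : (r / 4) • (b i : E) + x ∈ (Γ₁ : Set E) ∩ ball x r :=
      ⟨Γ₁.vadd_mem_of_mem_direction (Γ₁.direction.smul_mem _ (b i).2) hx, by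
        rw [mem_ball, hqx]; linarith⟩
    obtain ⟨s, hs, hsq⟩ := exists_mem_inter_ball_dist_lt_of_hausdorffDist_lt hxS hx
      (hHD.trans_lt (by nlinarith : ε * r < 2 * ε * r)) hq
    have hsy : s ∈ ball y r := mem_ball.mpr <| by
      nlinarith [dist_triangle4 s ((r / 4) • (b i : E) + x) x y, dist_eq_norm x y]
    obtain ⟨w, hw, w', hw', hws, hww'⟩ :=
      Γ₁.exists_mem_direction_near hx (hβ₁ s hs) (hβ₂ s ⟨hs.1, hsy⟩) (hβ₂ x hxy')
    refine ⟨w, hw, w', hw', ?_, by linarith⟩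
    calc ‖w - (r / 4) • (b i : E)‖ = ‖(w - (s - x)) + (s - ((r / 4) • (b i : E) + x))‖ := by
          congr 1; abel
      _ ≤ β₁ * r + 2 * ε * r :=
        (norm_add_le _ _).trans (add_le_add hws (by rw [← dist_eq_norm]; exact hsq.le))
      _ = r / 4 * (4 * β₁ + 8 * ε) := by ring
  choose w hw w' hw' hwu hww' using hframe
  have hnθ : √n * (4 * β₁ + 8 * ε) ≤ 1 / 2 := by
    nlinarith [Real.sqrt_natCast_le_add_one n, Real.sqrt_nonneg n]
  obtain ⟨v', hv', hdist⟩ := Submodule.exists_mem_closedBall_dist_le_of_frame hΓ₁ hu hw hw'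
    (by positivity) (by positivity) (by positivity) hnθ hwu hww' hv hv1
  exact ⟨v', hv', hdist.trans (by nlinarith [Real.sqrt_nonneg n])⟩

section RealizingPlane

variable {n d : ℕ} {S : Set (EuclideanSpace ℝ (Fin d))}
  {Γ Γ₁ Γ₂ : AffineSubspace ℝ (EuclideanSpace ℝ (Fin d))} {x y s : EuclideanSpace ℝ (Fin d)}
  {C' r ε : ℝ}

theorem planeSup_nonneg (hr : 0 ≤ r) : 0 ≤ planeSup S Γ x r :=
  mul_nonneg (inv_nonneg.mpr hr) (Real.sSup_nonneg (by rintro _ ⟨_, _, rfl⟩; exact infDist_nonneg))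

theorem infDist_le_planeSup_mul (hx : x ∈ Γ) (hr : 0 < r) (hs : s ∈ S ∩ ball x r) :
    infDist s Γ ≤ planeSup S Γ x r * r := by
  have hbdd : BddAbove ((fun z => infDist z (Γ : Set (EuclideanSpace ℝ (Fin d)))) ''
      (S ∩ ball x r)) :=
    ⟨r, by rintro _ ⟨z, ⟨-, hz⟩, rfl⟩; exact (infDist_le_dist_of_mem hx).trans (mem_ball.mp hz).le⟩
  calc infDist s Γ ≤ _ := le_csSup hbdd ⟨s, hs, rfl⟩
    _ = planeSup S Γ x r * r := by unfold planeSup; field_simp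

theorem exists_dist_le_planeSup_mul (hx : x ∈ Γ) (hr : 0 < r) (hs : s ∈ S ∩ ball x r) :
    ∃ t ∈ Γ, dist s t ≤ planeSup S Γ x r * r := by
  obtain ⟨t, ht, hst⟩ := Γ.closed_of_finiteDimensional.exists_infDist_eq_dist ⟨x, hx⟩ s
  exact ⟨t, ht, hst ▸ infDist_le_planeSup_mul hx hr hs⟩

theorem hausdorffDist_le_of_planeHD_le (hr : 0 < r) (h : planeHD S Γ x r ≤ ε) :
    hausdorffDist (S ∩ ball x r) ((Γ : Set (EuclideanSpace ℝ (Fin d))) ∩ ball x r) ≤ ε * r := by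
  rwa [planeHD, inv_mul_le_iff₀ hr, mul_comm] at h

theorem planeDist_le_one (Γ₁ Γ₂ : AffineSubspace ℝ (EuclideanSpace ℝ (Fin d))) :
    planeDist Γ₁ Γ₂ ≤ 1 := by
  have h0 : ∀ Γ : AffineSubspace ℝ (EuclideanSpace ℝ (Fin d)),
      (0 : EuclideanSpace ℝ (Fin d)) ∈ (Γ.direction : Set _) ∩ closedBall 0 1 :=
    fun Γ => ⟨Γ.direction.zero_mem, mem_closedBall_self zero_le_one⟩
  refine hausdorffDist_le_of_mem_dist zero_le_one ?_ ?_ <;>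
    exact fun v hv => ⟨0, h0 _, by rw [dist_zero_right]; exact mem_closedBall_zero_iff.mp hv.2⟩

namespace IsRealizingPlane

theorem betaNum_nonneg (h : IsRealizingPlane n C' S Γ x r) (hr : 0 ≤ r) : 0 ≤ betaNum n S x r :=
  h.2.2.1 ▸ planeSup_nonneg hr

theorem exists_dist_le (h : IsRealizingPlane n C' S Γ x r) (hr : 0 < r)
    (hs : s ∈ S ∩ ball x r) : ∃ t ∈ Γ, dist s t ≤ betaNum n S x r * r :=
  h.2.2.1 ▸ exists_dist_le_planeSup_mul h.1 hr hs

theorem exists_mem_direction_dist_le (h₁ : IsRealizingPlane n C' S Γ₁ x r)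
    (h₂ : IsRealizingPlane n C' S Γ₂ y r) (hr : 0 < r) (hxS : x ∈ S) (hxy : ‖x - y‖ < r / 4)
    (hε : 0 < ε) (hεn : 24 * (n + 1) * ε ≤ 1) (hα : C' * alphaNum n S x r ≤ ε)
    (hβ : betaNum n S x r ≤ ε) :
    ∀ v ∈ (Γ₁.direction : Set (EuclideanSpace ℝ (Fin d))) ∩ closedBall 0 1,
      ∃ w ∈ (Γ₂.direction : Set (EuclideanSpace ℝ (Fin d))) ∩ closedBall 0 1,
        dist v w ≤ 16 * √n * (betaNum n S x r + betaNum n S y r) := fun _ hv =>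
  Γ₁.exists_mem_direction_dist_le_of_flat hr hxS h₁.1 hxy h₁.2.1 hε hεn
    (hausdorffDist_le_of_planeHD_le hr (h₁.2.2.2.trans hα)) (fun _ => h₁.exists_dist_le hr)
    (fun _ => h₂.exists_dist_le hr) (h₁.betaNum_nonneg hr.le) (h₂.betaNum_nonneg hr.le) hβ hv.1
    (mem_closedBall_zero_iff.mp hv.2)

end IsRealizingPlane

end RealizingPlane

theorem stmt12 (n : ℕ) (C' : ℝ) (hC' : 1 ≤ C') :
    ∃ α₀ : ℝ, 0 < α₀ ∧ ∃ C : ℝ, 0 < C ∧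
      ∀ (d : ℕ) (S : Set (EuclideanSpace ℝ (Fin d)))
        (x y : EuclideanSpace ℝ (Fin d)) (r : ℝ),
        n < d → x ∈ S → y ∈ S → 0 < r →
        alphaNum n S x r ≤ α₀ → alphaNum n S y r ≤ α₀ → ‖x - y‖ < r / 4 →
        ∀ Γ₁ Γ₂ : AffineSubspace ℝ (EuclideanSpace ℝ (Fin d)),
          IsRealizingPlane n C' S Γ₁ x r → IsRealizingPlane n C' S Γ₂ y r →
          planeDist Γ₁ Γ₂ ≤ C * (betaNum n S x r + betaNum n S y r) := by
  set ε : ℝ := (24 * (n + 1))⁻¹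
  have hε : 0 < ε := by positivity
  have hεn : 24 * (n + 1) * ε = 1 := mul_inv_cancel₀ (by positivity)
  have hC'pos : 0 < C' := by linarith
  refine ⟨ε / C', by positivity, 24 * (n + 1), by positivity, ?_⟩
  intro d S x y r _ hxS hyS hr hαx hαy hxy Γ₁ Γ₂ h₁ h₂
  have hβx := h₁.betaNum_nonneg hr.le
  have hβy := h₂.betaNum_nonneg hr.le
  rcases le_or_gt (betaNum n S x r + betaNum n S y r) ε with hsmall | hlarge
  · have hC : 16 * √n * (betaNum n S x r + betaNum n S y r) ≤
        24 * (n + 1) * (betaNum n S x r + betaNum n S y r) := by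
      gcongr
      · norm_num
      · exact Real.sqrt_natCast_le_add_one n
    refine hausdorffDist_le_of_mem_dist (by positivity) (fun v hv => ?_) (fun v hv => ?_)
    · obtain ⟨w, hw, hvw⟩ := h₁.exists_mem_direction_dist_le h₂ hr hxS hxy hε hεn.le
        ((le_div_iff₀' hC'pos).mp hαx) (by linarith) v hv
      exact ⟨w, hw, hvw.trans hC⟩
    · obtain ⟨w, hw, hvw⟩ := h₂.exists_mem_direction_dist_le h₁ hr hyS
        (by rwa [norm_sub_rev]) hε hεn.le ((le_div_iff₀' hC'pos).mp hαy) (by linarith) v hv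
      exact ⟨w, hw, hvw.trans (add_comm (betaNum n S y r) _ ▸ hC)⟩
  · calc planeDist Γ₁ Γ₂ ≤ 1 := planeDist_le_one Γ₁ Γ₂
      _ = 24 * (n + 1) * ε := hεn.symm
      _ ≤ 24 * (n + 1) * (betaNum n S x r + betaNum n S y r) := by gcongr
end
end

section
/- For every n ∈ ℕ there exists a constant C = C(n) > 0 such that the following holds. Let S ⊂ ℝ^d be a closed set and n < d. Then α(x,r)² ≤ C · ã(x,r) for every x ∈ S and every r > 0. -/
/-!
A Gromov–Hausdorff approximation of `S ∩ B_r(x)` by the ball `B_r ⊂ ℝⁿ` within `δ` yields a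
correspondence `R` of distortion `2δ`. By polarization `R` almost preserves inner products based
at `x` (error `O(rδ)`). Choosing points `pᵢ ∈ S` corresponding to `(r/2) eᵢ`, the vectors
`uᵢ = (2/r)(pᵢ - x)` are almost orthonormal, and `Γ = x + span uᵢ` is the plane. A point `a`
corresponding to `y` lies within `O(√((n+1) r δ))` of `x + ∑ yᵢ uᵢ`, which gives both halves of
the Hausdorff estimate. When `δ` is large compared with `r / (n+1)`, the trivial bound `α ≤ 2`
suffices.
-/

open Metric Set

noncomputable section

open scoped RealInnerProductSpace

lemma abs_sq_sub_sq_le {p q c m : ℝ} (h : |p - q| ≤ c) (hp : 0 ≤ p) (hq : 0 ≤ q)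
    (hm : p + q ≤ m) : |p ^ 2 - q ^ 2| ≤ m * c := by
  rw [sq_sub_sq, abs_mul, abs_of_nonneg (add_nonneg hp hq)]
  exact mul_le_mul hm h (abs_nonneg _) ((add_nonneg hp hq).trans hm)

lemma sq_sum_abs_le_card_mul_norm_sq {ι : Type*} [Fintype ι] (y : EuclideanSpace ℝ ι) :
    (∑ i, |y i|) ^ 2 ≤ Fintype.card ι * ‖y‖ ^ 2 := by
  simpa [EuclideanSpace.real_norm_sq_eq, sq_abs] using
    sq_sum_le_card_mul_sum_sq (s := Finset.univ) (f := fun i => |y i|)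

section InnerSum

variable {E ι : Type*} [NormedAddCommGroup E] [InnerProductSpace ℝ E] [Fintype ι]

lemma abs_inner_sum_smul_sub_le {u : ι → E} {v : E} {c : ι → ℝ} {η : ℝ}
    (h : ∀ i, |⟪v, u i⟫ - c i| ≤ η) (t : ι → ℝ) :
    |⟪v, ∑ i, t i • u i⟫ - ∑ i, t i * c i| ≤ η * ∑ i, |t i| := by
  rw [inner_sum, Finset.mul_sum, ← Finset.sum_sub_distrib]
  refine (Finset.abs_sum_le_sum_abs _ _).trans (Finset.sum_le_sum fun i _ => ?_)
  rw [real_inner_smul_right, ← mul_sub, abs_mul, mul_comm η]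
  exact mul_le_mul_of_nonneg_left (h i) (abs_nonneg _)

lemma abs_norm_sum_smul_sq_sub_le [DecidableEq ι] {u : ι → E} {η : ℝ}
    (h : ∀ i j, |⟪u i, u j⟫ - if i = j then 1 else 0| ≤ η) (t : ι → ℝ) :
    |‖∑ i, t i • u i‖ ^ 2 - ∑ i, t i ^ 2| ≤ η * (∑ i, |t i|) ^ 2 := by
  have hrow : ∀ i, |⟪∑ j, t j • u j, u i⟫ - t i| ≤ η * ∑ j, |t j| := fun i => by
    simpa [real_inner_comm, mul_ite, Finset.sum_ite_eq] using abs_inner_sum_smul_sub_le (h i) t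
  simpa [← real_inner_self_eq_norm_sq, sq, mul_assoc] using abs_inner_sum_smul_sub_le hrow t

end InnerSum

lemma Submodule.norm_sub_starProjection_le {E : Type*} [NormedAddCommGroup E]
    [InnerProductSpace ℝ E] (K : Submodule ℝ E) [K.HasOrthogonalProjection] (v : E) {w : E}
    (hw : w ∈ K) : ‖v - K.starProjection v‖ ≤ ‖v - w‖ := by
  rw [Submodule.starProjection_minimal]
  exact ciInf_le ⟨0, Set.forall_mem_range.2 fun _ => norm_nonneg _⟩ (⟨w, hw⟩ : K)

def spanPlane {E ι : Type*} [NormedAddCommGroup E] [InnerProductSpace ℝ E] (x : E) (u : ι → E) :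
    AffineSubspace ℝ E :=
  AffineSubspace.mk' x (Submodule.span ℝ (Set.range u))

lemma mem_spanPlane {E ι : Type*} [NormedAddCommGroup E] [InnerProductSpace ℝ E] {x z : E}
    {u : ι → E} : z ∈ spanPlane x u ↔ z - x ∈ Submodule.span ℝ (Set.range u) :=
  AffineSubspace.mem_mk'

structure IsCorrespondence {α β : Type*} [PseudoMetricSpace α] [PseudoMetricSpace β]
    (X : Set α) (Y : Set β) (R : α → β → Prop) (ε : ℝ) : Prop where
  mem : ∀ a y, R a y → a ∈ X ∧ y ∈ Y
  exists_left : ∀ y ∈ Y, ∃ a, R a y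
  exists_right : ∀ a ∈ X, ∃ y, R a y
  abs_dist_sub_dist_le : ∀ a y a' y', R a y → R a' y' → |dist a a' - dist y y'| ≤ ε

def IsFrame {E ι : Type*} [NormedAddCommGroup E] [NormedSpace ℝ E] [DecidableEq ι]
    (R : E → EuclideanSpace ℝ ι → Prop) (x : E) (r : ℝ) (u : ι → E) : Prop :=
  ∀ i, R (x + (r / 2) • u i) ((r / 2) • EuclideanSpace.single i (1 : ℝ))

namespace IsCorrespondence

lemma nonneg {α β : Type*} [PseudoMetricSpace α] [PseudoMetricSpace β] {X : Set α} {Y : Set β}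
    {R : α → β → Prop} {ε : ℝ} (hR : IsCorrespondence X Y R ε) {a : α} (ha : a ∈ X) :
    0 ≤ ε := by
  obtain ⟨y, h⟩ := hR.exists_right a ha
  simpa using hR.abs_dist_sub_dist_le a y a y h h

section Normed

variable {E F : Type*} [NormedAddCommGroup E] [NormedAddCommGroup F] [NormedSpace ℝ F]
  {X : Set E} {x a : E} {r ε : ℝ} {R : E → F → Prop} {y : F}

lemma norm_le_of_rel_center (hR : IsCorrespondence X (ball (0 : F) r) R ε) (hX : X ⊆ ball x r)
    {y₀ : F} (h₀ : R x y₀) : ‖y₀‖ ≤ ε := by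
  have hy₀ : ‖y₀‖ < r := mem_ball_zero_iff.1 (hR.mem _ _ h₀).2
  rcases eq_or_ne y₀ 0 with rfl | hne
  · simpa using hR.nonneg (hR.mem _ _ h₀).1
  have hpos : 0 < ‖y₀‖ := norm_pos_iff.2 hne
  refine le_of_forall_pos_lt_add fun η hη => ?_
  -- compare with a point of norm almost `r` on the opposite side of `0`
  set t := max 0 (r - η)
  have ht : t < r := max_lt (by linarith) (by linarith)
  set c := t / ‖y₀‖
  have hc : 0 ≤ c := div_nonneg (le_max_left _ _) hpos.le
  have hcy : c * ‖y₀‖ = t := div_mul_cancel₀ _ hpos.ne'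
  have hy' : ‖-c • y₀‖ = t := by rw [norm_smul, norm_neg, Real.norm_of_nonneg hc, hcy]
  obtain ⟨a, ha⟩ := hR.exists_left (-c • y₀) (mem_ball_zero_iff.2 (hy' ▸ ht))
  have hdist : dist (-c • y₀) y₀ = t + ‖y₀‖ := by
    rw [dist_eq_norm, show -c • y₀ - y₀ = -(c + 1) • y₀ by module, norm_smul, norm_neg,
      Real.norm_of_nonneg (by linarith), add_mul, hcy, one_mul]
  have hax : dist a x < r := hX (hR.mem _ _ ha).1
  have hcorr := (abs_le.1 (hR.abs_dist_sub_dist_le a _ x y₀ ha h₀)).1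
  linarith [le_max_right 0 (r - η)]

lemma abs_norm_sub_sub_norm_le (hR : IsCorrespondence X (ball (0 : F) r) R ε)
    (hX : X ⊆ ball x r) (hxX : x ∈ X) (h : R a y) : |‖a - x‖ - ‖y‖| ≤ 2 * ε := by
  obtain ⟨y₀, h₀⟩ := hR.exists_right x hxX
  have hy₀ := hR.norm_le_of_rel_center hX h₀
  have h₁ := hR.abs_dist_sub_dist_le a y x y₀ h h₀
  have h₂ : |‖y - y₀‖ - ‖y‖| ≤ ‖y₀‖ := by
    simpa using abs_norm_sub_norm_le (y - y₀) y
  rw [dist_eq_norm, dist_eq_norm] at h₁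
  calc |‖a - x‖ - ‖y‖| ≤ |‖a - x‖ - ‖y - y₀‖| + |‖y - y₀‖ - ‖y‖| := abs_sub_le _ _ _
    _ ≤ 2 * ε := by linarith

end Normed

section Inner

variable {E F : Type*} [NormedAddCommGroup E] [InnerProductSpace ℝ E]
  [NormedAddCommGroup F] [InnerProductSpace ℝ F] {X : Set E} {x a a' : E} {r ε : ℝ}
  {R : E → F → Prop} {y y' : F}

lemma abs_inner_sub_inner_le (hR : IsCorrespondence X (ball (0 : F) r) R ε)
    (hX : X ⊆ ball x r) (hxX : x ∈ X) (h : R a y) (h' : R a' y') :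
    |⟪a - x, a' - x⟫ - ⟪y, y'⟫| ≤ 6 * r * ε := by
  obtain ⟨ha, hy⟩ := hR.mem _ _ h
  obtain ⟨ha', hy'⟩ := hR.mem _ _ h'
  have hax : ‖a - x‖ < r := mem_ball_iff_norm.1 (hX ha)
  have hax' : ‖a' - x‖ < r := mem_ball_iff_norm.1 (hX ha')
  have hy : ‖y‖ < r := mem_ball_zero_iff.1 hy
  have hy' : ‖y'‖ < r := mem_ball_zero_iff.1 hy'
  have hsq {v : E} {z : F} (hv : ‖v‖ < r) (hz : ‖z‖ < r) (hvz : |‖v‖ - ‖z‖| ≤ 2 * ε) :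
      |‖v‖ ^ 2 - ‖z‖ ^ 2| ≤ 2 * r * (2 * ε) :=
    abs_sq_sub_sq_le hvz (norm_nonneg _) (norm_nonneg _) (by linarith)
  have e₁ := abs_le.1 (hsq hax hy (hR.abs_norm_sub_sub_norm_le hX hxX h))
  have e₂ := abs_le.1 (hsq hax' hy' (hR.abs_norm_sub_sub_norm_le hX hxX h'))
  have e₃ : |‖(a - x) - (a' - x)‖ ^ 2 - ‖y - y'‖ ^ 2| ≤ 4 * r * ε := by
    have hd := hR.abs_dist_sub_dist_le a y a' y' h h'
    rw [dist_eq_norm, dist_eq_norm] at hd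
    rw [sub_sub_sub_cancel_right]
    refine abs_sq_sub_sq_le hd (norm_nonneg _) (norm_nonneg _) ?_
    linarith [norm_sub_le_norm_sub_add_norm_sub a x a', norm_sub_rev a' x,
      norm_sub_le y y', norm_neg y']
  have e₃ := abs_le.1 e₃
  rw [norm_sub_sq_real (a - x), norm_sub_sq_real y] at e₃
  rw [abs_le]
  constructor <;> linarith [e₁.1, e₁.2, e₂.1, e₂.2, e₃.1, e₃.2]

end Inner

section Frame

variable {E ι : Type*} [NormedAddCommGroup E] [InnerProductSpace ℝ E] [Fintype ι]
  {X : Set E} {x a : E} {r ε : ℝ} {R : E → EuclideanSpace ℝ ι → Prop} {u : ι → E}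
  {y : EuclideanSpace ℝ ι} [DecidableEq ι]

lemma abs_inner_frame_sub_le (hR : IsCorrespondence X (ball 0 r) R ε)
    (hX : X ⊆ ball x r) (hxX : x ∈ X) (hr : 0 < r) (hu : IsFrame R x r u) (i j : ι) :
    |⟪u i, u j⟫ - if i = j then 1 else 0| ≤ 24 * ε / r := by
  have h := hR.abs_inner_sub_inner_le hX hxX (hu i) (hu j)
  have he : ⟪(r / 2) • EuclideanSpace.single i (1 : ℝ), (r / 2) • EuclideanSpace.single j 1⟫
      = (r / 2) ^ 2 * if i = j then 1 else 0 := by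
    simp [real_inner_smul_left, real_inner_smul_right, EuclideanSpace.inner_single_left, sq]
  simp only [add_sub_cancel_left, he, real_inner_smul_left, real_inner_smul_right] at h
  rw [← mul_assoc, ← sq, ← mul_sub, abs_mul, abs_of_pos (by positivity)] at h
  rw [le_div_iff₀ hr]
  nlinarith [abs_nonneg (⟪u i, u j⟫ - if i = j then 1 else 0)]

lemma abs_inner_frame_sub_coord_le (hR : IsCorrespondence X (ball 0 r) R ε)
    (hX : X ⊆ ball x r) (hxX : x ∈ X) (hr : 0 < r) (hu : IsFrame R x r u) (h : R a y)
    (i : ι) : |⟪a - x, u i⟫ - y i| ≤ 12 * ε := by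
  have h := hR.abs_inner_sub_inner_le hX hxX h (hu i)
  rw [add_sub_cancel_left, real_inner_smul_right, real_inner_smul_right,
    EuclideanSpace.inner_single_right, ← mul_sub, abs_mul, abs_of_pos (by positivity)] at h
  simp only [conj_trivial, one_mul] at h
  nlinarith [abs_nonneg (⟪a - x, u i⟫ - y i)]

lemma norm_sub_sum_frame_sq_le (hR : IsCorrespondence X (ball 0 r) R ε)
    (hX : X ⊆ ball x r) (hxX : x ∈ X) (hr : 0 < r) (hu : IsFrame R x r u) (h : R a y) :
    ‖(a - x) - ∑ i, y i • u i‖ ^ 2 ≤ 42 * (Fintype.card ι + 1) * r * ε := by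
  set N : ℝ := (Fintype.card ι : ℝ)
  set ℓ := ∑ i, |y i|
  have hε := hR.nonneg hxX
  have hy : ‖y‖ < r := mem_ball_zero_iff.1 (hR.mem _ _ h).2
  have hnorm := abs_le.1 (by
    simpa [real_inner_self_eq_norm_sq] using hR.abs_inner_sub_inner_le hX hxX h h)
  have hinner := abs_le.1 (abs_inner_sum_smul_sub_le
    (hR.abs_inner_frame_sub_coord_le hX hxX hr hu h) y)
  have hsum := abs_le.1 (abs_norm_sum_smul_sq_sub_le (hR.abs_inner_frame_sub_le hX hxX hr hu) y)
  have hy2 : ∑ i, y i ^ 2 = ‖y‖ ^ 2 := (EuclideanSpace.real_norm_sq_eq y).symm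
  have hℓ : ℓ ^ 2 ≤ N * r ^ 2 :=
    (sq_sum_abs_le_card_mul_norm_sq y).trans (by gcongr)
  have hℓ' : 24 * ε / r * ℓ ^ 2 ≤ 24 * N * r * ε := by
    calc 24 * ε / r * ℓ ^ 2 ≤ 24 * ε / r * (N * r ^ 2) := by gcongr
      _ = 24 * N * r * ε := by field_simp
  have hℓr : ℓ ≤ (N + 1) * r / 2 := by
    refine le_of_mul_le_mul_left ?_ hr
    nlinarith [sq_nonneg (r - ℓ)]
  have hlin : 24 * ε * ℓ ≤ 12 * (N + 1) * r * ε :=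
    calc 24 * ε * ℓ ≤ 24 * ε * ((N + 1) * r / 2) := by gcongr
      _ = 12 * (N + 1) * r * ε := by ring
  have hNrε : 0 ≤ N * r * ε := by positivity
  rw [norm_sub_sq_real]
  simp only [← sq, hy2] at hinner
  rw [hy2] at hsum
  linarith

lemma le_norm_sum_frame_sq (hR : IsCorrespondence X (ball 0 r) R ε)
    (hX : X ⊆ ball x r) (hxX : x ∈ X) (hr : 0 < r) (hu : IsFrame R x r u)
    (t : EuclideanSpace ℝ ι) :
    (1 - 24 * Fintype.card ι * ε / r) * ‖t‖ ^ 2 ≤ ‖∑ i, t i • u i‖ ^ 2 := by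
  have hε := hR.nonneg hxX
  have hsum := (abs_le.1 (abs_norm_sum_smul_sq_sub_le
    (hR.abs_inner_frame_sub_le hX hxX hr hu) t)).1
  have ht2 : ∑ i, t i ^ 2 = ‖t‖ ^ 2 := (EuclideanSpace.real_norm_sq_eq t).symm
  have hℓ : 24 * ε / r * (∑ i, |t i|) ^ 2 ≤ 24 * ε / r * (Fintype.card ι * ‖t‖ ^ 2) := by
    gcongr
    exact sq_sum_abs_le_card_mul_norm_sq t
  have : 24 * ε / r * (Fintype.card ι * ‖t‖ ^ 2) = 24 * Fintype.card ι * ε / r * ‖t‖ ^ 2 := by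
    ring
  linarith

lemma exists_frame (hR : IsCorrespondence X (ball 0 r) R ε) (hr : 0 < r) :
    ∃ u : ι → E, IsFrame R x r u := by
  have hmem : ∀ i, (r / 2) • EuclideanSpace.single i (1 : ℝ) ∈ ball (0 : EuclideanSpace ℝ ι) r :=
    fun i => by simp [norm_smul, abs_of_pos hr, hr]
  choose p hp using fun i => hR.exists_left _ (hmem i)
  refine ⟨fun i => (2 / r) • (p i - x), fun i => ?_⟩
  rw [smul_smul, div_mul_div_cancel₀ (by positivity), div_self hr.ne', one_smul,
    add_sub_cancel]
  exact hp i

lemma linearIndependent_frame (hR : IsCorrespondence X (ball 0 r) R ε)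
    (hX : X ⊆ ball x r) (hxX : x ∈ X) (hr : 0 < r) (hu : IsFrame R x r u)
    (hsmall : 48 * (Fintype.card ι + 1) * ε ≤ r) : LinearIndependent ℝ u := by
  rw [Fintype.linearIndependent_iff]
  intro t ht
  have hlow := hR.le_norm_sum_frame_sq hX hxX hr hu (WithLp.toLp 2 t)
  have hlt : 24 * Fintype.card ι * ε / r < 1 := by
    rw [div_lt_one hr]; nlinarith [hR.nonneg hxX]
  simp only [ht, norm_zero] at hlow
  have hsq : ‖WithLp.toLp 2 t‖ ^ 2 ≤ 0 := by nlinarith [sub_pos.2 hlt]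
  have ht0 : WithLp.toLp 2 t = 0 := by simpa using le_antisymm hsq (sq_nonneg _)
  exact fun i => by simpa using congrArg (fun v : EuclideanSpace ℝ ι => v i) ht0

lemma exists_mem_spanPlane_dist_le (hR : IsCorrespondence X (ball 0 r) R ε)
    (hX : X ⊆ ball x r) (hxX : x ∈ X) (hr : 0 < r) (hu : IsFrame R x r u)
    {a : E} (ha : a ∈ X) :
    ∃ z ∈ (spanPlane x u : Set E) ∩ ball x r,
      dist a z ≤ √(42 * (Fintype.card ι + 1) * r * ε) := by
  obtain ⟨y, h⟩ := hR.exists_right a ha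
  have hε := hR.nonneg hxX
  set V := Submodule.span ℝ (Set.range u)
  have : FiniteDimensional ℝ V := FiniteDimensional.span_of_finite ℝ (Set.finite_range u)
  set w := V.starProjection (a - x)
  refine ⟨x + w, ⟨?_, ?_⟩, ?_⟩
  · rw [SetLike.mem_coe, mem_spanPlane, add_sub_cancel_left]
    exact V.starProjection_apply_mem _
  · rw [mem_ball_iff_norm, add_sub_cancel_left]
    exact (V.norm_starProjection_apply_le _).trans_lt (mem_ball_iff_norm.1 (hX ha))
  · have hLy : ∑ i, y i • u i ∈ V :=
      Submodule.sum_mem _ fun i _ => Submodule.smul_mem _ _ (Submodule.subset_span ⟨i, rfl⟩)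
    rw [dist_eq_norm, sub_add_eq_sub_sub]
    refine (V.norm_sub_starProjection_le _ hLy).trans ?_
    exact (Real.le_sqrt (norm_nonneg _) (by positivity)).2
      (hR.norm_sub_sum_frame_sq_le hX hxX hr hu h)

lemma exists_dist_le_of_mem_spanPlane (hR : IsCorrespondence X (ball 0 r) R ε)
    (hX : X ⊆ ball x r) (hxX : x ∈ X) (hr : 0 < r) (hu : IsFrame R x r u)
    (hsmall : 48 * (Fintype.card ι + 1) * ε ≤ r) {z : E}
    (hz : z ∈ (spanPlane x u : Set E) ∩ ball x r) :
    ∃ a ∈ X, dist z a ≤ √(42 * (Fintype.card ι + 1) * r * ε) + 24 * Fintype.card ι * ε := by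
  obtain ⟨hzΓ, hzr⟩ := hz
  rw [SetLike.mem_coe, mem_spanPlane, Submodule.mem_span_range_iff_exists_fun] at hzΓ
  obtain ⟨t, ht⟩ := hzΓ
  have hε := hR.nonneg hxX
  have hzx : ‖z - x‖ < r := mem_ball_iff_norm.1 hzr
  -- the coordinates `t` of `z - x` may leave `ball 0 r`; by `le_norm_sum_frame_sq`, `(1 - c) • t`
  -- does not
  set c := 24 * Fintype.card ι * ε / r
  have hc0 : 0 ≤ c := by positivity
  have hc1 : c ≤ 1 / 2 := by rw [div_le_iff₀ hr]; nlinarith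
  have hlow := hR.le_norm_sum_frame_sq hX hxX hr hu (WithLp.toLp 2 t)
  simp only [ht] at hlow
  set y := (1 - c) • WithLp.toLp 2 t
  have hy : ‖y‖ < r := by
    rw [← pow_lt_pow_iff_left₀ (norm_nonneg _) hr.le two_ne_zero, norm_smul, mul_pow,
      Real.norm_of_nonneg (by linarith)]
    nlinarith [sq_nonneg ‖WithLp.toLp 2 t‖, pow_lt_pow_left₀ hzx (norm_nonneg _) two_ne_zero]
  obtain ⟨a, h⟩ := hR.exists_left y (mem_ball_zero_iff.2 hy)
  have hLy : ∑ i, y i • u i = (1 - c) • (z - x) := by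
    simp [y, smul_smul, ← ht, Finset.smul_sum]
  have hkey := hR.norm_sub_sum_frame_sq_le hX hxX hr hu h
  rw [hLy] at hkey
  refine ⟨a, (hR.mem _ _ h).1, ?_⟩
  have hcz : ‖c • (z - x)‖ ≤ 24 * Fintype.card ι * ε := by
    rw [norm_smul, Real.norm_of_nonneg hc0]
    calc c * ‖z - x‖ ≤ c * r := by gcongr
      _ = 24 * Fintype.card ι * ε := div_mul_cancel₀ _ hr.ne'
  calc dist z a = ‖c • (z - x) - ((a - x) - (1 - c) • (z - x))‖ := by
        rw [dist_eq_norm]; congr 1; module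
    _ ≤ ‖c • (z - x)‖ + ‖(a - x) - (1 - c) • (z - x)‖ := norm_sub_le _ _
    _ ≤ _ := by
      rw [add_comm]
      exact add_le_add ((Real.le_sqrt (norm_nonneg _) (by positivity)).2 hkey) hcz

theorem exists_affineSubspace_hausdorffDist_le (hR : IsCorrespondence X (ball 0 r) R ε)
    (hX : X ⊆ ball x r) (hxX : x ∈ X) (hsmall : 48 * (Fintype.card ι + 1) * ε ≤ r) :
    ∃ Γ : AffineSubspace ℝ E, x ∈ Γ ∧ Module.finrank ℝ Γ.direction = Fintype.card ι ∧
      hausdorffDist X ((Γ : Set E) ∩ ball x r) ≤ 11 * √((Fintype.card ι + 1) * r * ε) := by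
  have hr : 0 < r := pos_of_mem_ball (hX hxX)
  have hε := hR.nonneg hxX
  obtain ⟨u, hu⟩ := hR.exists_frame (x := x) hr
  set N : ℝ := (Fintype.card ι : ℝ)
  set q := (N + 1) * r * ε
  have hq : 0 ≤ q := by positivity
  have hsq {b c : ℝ} (hb : 0 ≤ b) (hc : 0 ≤ c) (h : b ^ 2 ≤ c ^ 2 * q) : b ≤ c * √q := by
    rwa [← pow_le_pow_iff_left₀ hb (by positivity) two_ne_zero, mul_pow, Real.sq_sqrt hq]
  have h₁ : √(42 * (N + 1) * r * ε) ≤ 7 * √q :=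
    hsq (Real.sqrt_nonneg _) (by norm_num) (by rw [Real.sq_sqrt (by positivity)]; nlinarith)
  have h₂ : 24 * N * ε ≤ 4 * √q := by
    have hN : 0 ≤ N := Nat.cast_nonneg _
    have := mul_le_mul_of_nonneg_left hsmall (mul_nonneg hN hε)
    exact hsq (by positivity) (by norm_num) (by nlinarith [mul_nonneg hr.le hε])
  refine ⟨spanPlane x u, AffineSubspace.self_mem_mk' _ _, ?_, ?_⟩
  · rw [spanPlane, AffineSubspace.direction_mk',
      finrank_span_eq_card (hR.linearIndependent_frame hX hxX hr hu hsmall)]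
  refine hausdorffDist_le_of_mem_dist (by positivity) (fun a ha => ?_) (fun z hz => ?_)
  · obtain ⟨z, hz, hd⟩ := hR.exists_mem_spanPlane_dist_le hX hxX hr hu ha
    exact ⟨z, hz, by linarith [Real.sqrt_nonneg q]⟩
  · obtain ⟨a, ha, hd⟩ := hR.exists_dist_le_of_mem_spanPlane hX hxX hr hu hsmall hz
    exact ⟨a, ha, by linarith⟩

end Frame

end IsCorrespondence

theorem exists_isCorrespondence_of_ghDist_lt {α β : Type} [MetricSpace α] [MetricSpace β]
    {X : Set α} {Y : Set β} {δ : ℝ} (hX : X.Nonempty) (hY : Y.Nonempty)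
    (hXb : Bornology.IsBounded X) (hYb : Bornology.IsBounded Y) (h : ghDist X Y < δ) :
    ∃ R : α → β → Prop, IsCorrespondence X Y R (2 * δ) := by
  obtain ⟨t, ⟨M, hM₁, hM₂, hMt⟩, htδ⟩ := exists_lt_of_csInf_lt
    (by exact ⟨_, metricSpaceSum, fun _ _ => rfl, fun _ _ => rfl, le_rfl⟩) h
  let := M
  have : Nonempty X := hX.to_subtype
  have : Nonempty Y := hY.to_subtype
  have hδ : hausdorffDist (range (Sum.inl : X → X ⊕ Y)) (range Sum.inr) < δ := hMt.trans_lt htδ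
  have hfin : hausdorffEDist (range (Sum.inl : X → X ⊕ Y)) (range Sum.inr) ≠ ⊤ :=
    hausdorffEDist_ne_top_of_nonempty_of_bounded (range_nonempty _) (range_nonempty _)
      (isBounded_range_iff.2 ⟨diam X, fun a b => by
        rw [hM₁]; exact dist_le_diam_of_mem hXb a.2 b.2⟩)
      (isBounded_range_iff.2 ⟨diam Y, fun a b => by
        rw [hM₂]; exact dist_le_diam_of_mem hYb a.2 b.2⟩)
  refine ⟨fun a y => ∃ (ha : a ∈ X) (hy : y ∈ Y),
    dist (Sum.inl ⟨a, ha⟩ : X ⊕ Y) (Sum.inr ⟨y, hy⟩) < δ, ⟨?_, ?_, ?_, ?_⟩⟩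
  · rintro a y ⟨ha, hy, -⟩
    exact ⟨ha, hy⟩
  · intro y hy
    obtain ⟨_, ⟨a, rfl⟩, hd⟩ := exists_dist_lt_of_hausdorffDist_lt' (mem_range_self _) hδ hfin
    exact ⟨a, a.2, hy, hd⟩
  · intro a ha
    obtain ⟨_, ⟨y, rfl⟩, hd⟩ := exists_dist_lt_of_hausdorffDist_lt (mem_range_self _) hδ hfin
    exact ⟨y, ha, y.2, hd⟩
  · rintro a y a' y' ⟨ha, hy, hd⟩ ⟨ha', hy', hd'⟩
    have e₁ : dist a a' = dist (Sum.inl ⟨a, ha⟩ : X ⊕ Y) (Sum.inl ⟨a', ha'⟩) := by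
      rw [hM₁]; rfl
    have e₂ : dist y y' = dist (Sum.inr ⟨y, hy⟩ : X ⊕ Y) (Sum.inr ⟨y', hy'⟩) := by
      rw [hM₂]; rfl
    rw [e₁, e₂, abs_le]
    constructor
    · linarith [dist_triangle4 (Sum.inr ⟨y, hy⟩ : X ⊕ Y) (Sum.inl ⟨a, ha⟩) (Sum.inl ⟨a', ha'⟩)
        (Sum.inr ⟨y', hy'⟩), dist_comm (Sum.inr ⟨y, hy⟩ : X ⊕ Y) (Sum.inl ⟨a, ha⟩)]
    · linarith [dist_triangle4 (Sum.inl ⟨a, ha⟩ : X ⊕ Y) (Sum.inr ⟨y, hy⟩) (Sum.inr ⟨y', hy'⟩)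
        (Sum.inl ⟨a', ha'⟩), dist_comm (Sum.inr ⟨y', hy'⟩ : X ⊕ Y) (Sum.inl ⟨a', ha'⟩)]

lemma exists_affineSubspace_finrank_eq {E : Type*} [NormedAddCommGroup E] [InnerProductSpace ℝ E]
    {n : ℕ} (hn : n ≤ Module.finrank ℝ E) (x : E) :
    ∃ Γ : AffineSubspace ℝ E, x ∈ Γ ∧ Module.finrank ℝ Γ.direction = n := by
  obtain ⟨u, hu⟩ := exists_linearIndependent_of_le_finrank hn
  refine ⟨spanPlane x u, AffineSubspace.self_mem_mk' _ _, ?_⟩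
  rw [spanPlane, AffineSubspace.direction_mk', finrank_span_eq_card hu, Fintype.card_fin]

section Alpha

variable {n d : ℕ} {S : Set (EuclideanSpace ℝ (Fin d))} {x : EuclideanSpace ℝ (Fin d)} {r : ℝ}

lemma alphaNum_nonneg (hr : 0 ≤ r) : 0 ≤ alphaNum n S x r :=
  Real.sInf_nonneg fun _ ⟨_, _, _, ht⟩ => ht ▸ mul_nonneg (inv_nonneg.2 hr) hausdorffDist_nonneg

lemma alphaNum_le_planeHD (hr : 0 ≤ r) {Γ : AffineSubspace ℝ (EuclideanSpace ℝ (Fin d))}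
    (hxΓ : x ∈ Γ) (hΓ : Module.finrank ℝ Γ.direction = n) : alphaNum n S x r ≤ planeHD S Γ x r :=
  csInf_le ⟨0, fun _ ⟨_, _, _, ht⟩ => ht ▸ mul_nonneg (inv_nonneg.2 hr) hausdorffDist_nonneg⟩
    ⟨Γ, hxΓ, hΓ, rfl⟩

lemma planeHD_le_two (hr : 0 < r) (hx : x ∈ S) {Γ : AffineSubspace ℝ (EuclideanSpace ℝ (Fin d))}
    (hxΓ : x ∈ Γ) : planeHD S Γ x r ≤ 2 := by
  have h : hausdorffDist (S ∩ ball x r) ((Γ : Set _) ∩ ball x r) ≤ 2 * r :=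
    hausdorffDist_le_of_mem_dist (by positivity)
      (fun q hq => ⟨x, ⟨hxΓ, mem_ball_self hr⟩, by linarith [mem_ball.1 hq.2]⟩)
      (fun w hw => ⟨x, ⟨hx, mem_ball_self hr⟩, by linarith [mem_ball.1 hw.2]⟩)
  calc planeHD S Γ x r ≤ r⁻¹ * (2 * r) := mul_le_mul_of_nonneg_left h (inv_nonneg.2 hr.le)
    _ = 2 := by field_simp

lemma alphaNum_le_two (hnd : n ≤ d) (hx : x ∈ S) (hr : 0 < r) : alphaNum n S x r ≤ 2 := by
  obtain ⟨Γ, hxΓ, hΓ⟩ :=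
    exists_affineSubspace_finrank_eq (n := n) (by rwa [finrank_euclideanSpace_fin]) x
  exact (alphaNum_le_planeHD hr.le hxΓ hΓ).trans (planeHD_le_two hr hx hxΓ)

lemma sq_alphaNum_mul_le_of_isCorrespondence (hnd : n ≤ d) (hx : x ∈ S) (hr : 0 < r)
    {R : EuclideanSpace ℝ (Fin d) → EuclideanSpace ℝ (Fin n) → Prop} {ε : ℝ}
    (hR : IsCorrespondence (S ∩ ball x r) (ball 0 r) R ε) :
    alphaNum n S x r ^ 2 * r ≤ 192 * (n + 1) * ε := by
  have hxX : x ∈ S ∩ ball x r := ⟨hx, mem_ball_self hr⟩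
  have hα : 0 ≤ alphaNum n S x r := alphaNum_nonneg hr.le
  have hε := hR.nonneg hxX
  by_cases hsmall : 48 * (n + 1) * ε ≤ r
  · obtain ⟨Γ, hxΓ, hΓ, hd⟩ := hR.exists_affineSubspace_hausdorffDist_le inter_subset_right hxX
      (by simpa using hsmall)
    simp only [Fintype.card_fin] at hΓ hd
    have h₁ : alphaNum n S x r * r ≤ 11 * √((n + 1) * r * ε) := by
      rw [← le_div_iff₀ hr, div_eq_inv_mul]
      exact (alphaNum_le_planeHD hr.le hxΓ hΓ).trans (mul_le_mul_of_nonneg_left hd (by positivity))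
    have h₂ := pow_le_pow_left₀ (by positivity) h₁ 2
    rw [mul_pow, mul_pow, Real.sq_sqrt (by positivity)] at h₂
    nlinarith
  · have h₄ : alphaNum n S x r ^ 2 ≤ 4 := by nlinarith [alphaNum_le_two (S := S) hnd hx hr]
    nlinarith [mul_le_mul_of_nonneg_right h₄ hr.le]

end Alpha

theorem stmt13 (n : ℕ) :
    ∃ C : ℝ, 0 < C ∧
      ∀ (d : ℕ) (S : Set (EuclideanSpace ℝ (Fin d))),
        n < d → IsClosed S →
        ∀ x ∈ S, ∀ r : ℝ, 0 < r →
          (alphaNum n S x r) ^ 2 ≤ C * aTilde n S x r := by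
  refine ⟨384 * (n + 1), by positivity, fun d S hnd _ x hx r hr => ?_⟩
  have hC : (0 : ℝ) < 384 * (n + 1) := by positivity
  have hgh : alphaNum n S x r ^ 2 * r / (384 * (n + 1)) ≤
      ghDist ↥(S ∩ ball x r) ↥(ball (0 : EuclideanSpace ℝ (Fin n)) r) := by
    refine le_of_forall_gt_imp_ge_of_dense fun δ hδ => ?_
    obtain ⟨R, hR⟩ := exists_isCorrespondence_of_ghDist_lt (X := S ∩ ball x r)
      (Y := ball (0 : EuclideanSpace ℝ (Fin n)) r) ⟨x, hx, mem_ball_self hr⟩ ⟨0, mem_ball_self hr⟩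
      (isBounded_ball.subset inter_subset_right) isBounded_ball hδ
    rw [div_le_iff₀ hC]
    linarith [sq_alphaNum_mul_le_of_isCorrespondence hnd.le hx hr hR]
  rw [div_le_iff₀ hC] at hgh
  rw [aTilde, ← mul_assoc, mul_comm _ r⁻¹, mul_assoc, le_inv_mul_iff₀ hr]
  linarith

end
end
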